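/- arXiv:2503.21399 — 4 statements merged into one kernel-verified Lean document; each statement's English description precedes it below -/
import Mathlib

section
/- Let Σ be a positive definite real n×n matrix and let H be a real m×n matrix of rank m (i.e., H is surjective as a linear map ℝⁿ → ℝᵐ), with m ≤ n. Then lim_{δ→0⁺} δ^{2m} · det(Iₙ + δ⁻² Σ^{1/2} HᵀH Σ^{1/2}) = det(H Σ Hᵀ), where Σ^{1/2} denotes the positive semidefinite square root of Σ and the limit is over δ tending to 0 from the right. -/
/-! Writing `Σ = Σ^{1/2} Σ^{1/2}`, the Weinstein–Aronszajn identity `det(1 + AB) = det(1 + BA)`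
with `A = Σ^{1/2}Hᵀ`, `B = δ⁻² HΣ^{1/2}` turns the `n×n` determinant into an `m×m` one:
`δ^{2m} det(Iₙ + δ⁻² Σ^{1/2}HᵀHΣ^{1/2}) = det(δ² Iₘ + HΣHᵀ)`, which is continuous in `δ`. -/

open Filter Topology

open scoped ComplexOrder in
/-- The positive semidefinite square root, as `Matrix.PosSemidef.sqrt` was defined in Mathlib
(December 2024); it has since been removed from Mathlib in favour of `CFC.sqrt`. -/
noncomputable def Matrix.PosSemidef.sqrt {n 𝕜 : Type*} [Fintype n] [RCLike 𝕜] [DecidableEq n]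
    {A : Matrix n n 𝕜} (hA : A.PosSemidef) : Matrix n n 𝕜 :=
  (hA.1.eigenvectorUnitary : Matrix n n 𝕜) *
    Matrix.diagonal ((RCLike.ofReal : ℝ → 𝕜) ∘ Real.sqrt ∘ hA.1.eigenvalues) *
    (star hA.1.eigenvectorUnitary : Matrix n n 𝕜)

open scoped ComplexOrder in
theorem Matrix.PosSemidef.sqrt_mul_sqrt {n 𝕜 : Type*} [Fintype n] [RCLike 𝕜] [DecidableEq n]
    {A : Matrix n n 𝕜} (hA : A.PosSemidef) : hA.sqrt * hA.sqrt = A := by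
  set U : Matrix n n 𝕜 := (hA.1.eigenvectorUnitary : Matrix n n 𝕜)
  set D : Matrix n n 𝕜 := Matrix.diagonal ((RCLike.ofReal : ℝ → 𝕜) ∘ Real.sqrt ∘ hA.1.eigenvalues)
  have hU : star U * U = 1 := Unitary.coe_star_mul_self _
  have hD : D * D = Matrix.diagonal ((RCLike.ofReal : ℝ → 𝕜) ∘ hA.1.eigenvalues) := by
    rw [Matrix.diagonal_mul_diagonal]
    congr 1
    funext i
    simp only [Function.comp_apply, ← RCLike.ofReal_mul,
      Real.mul_self_sqrt (hA.eigenvalues_nonneg i)]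
  calc hA.sqrt * hA.sqrt = U * (D * (star U * U) * D) * star U := by
        simp only [Matrix.PosSemidef.sqrt, U, D, Matrix.mul_assoc]
    _ = U * Matrix.diagonal ((RCLike.ofReal : ℝ → 𝕜) ∘ hA.1.eigenvalues) * star U := by
      rw [hU, Matrix.mul_one, hD]
    _ = A := hA.1.spectral_theorem.symm

theorem Matrix.pow_card_mul_det_one_add_inv_smul_mul {m n K : Type*} [Fintype m] [Fintype n]
    [DecidableEq m] [DecidableEq n] [Field K] (A : Matrix n m K) (B : Matrix m n K) {c : K}
    (hc : c ≠ 0) :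
    c ^ Fintype.card m * (1 + c⁻¹ • (A * B)).det = (c • 1 + B * A).det := by
  rw [← Matrix.mul_smul, Matrix.det_one_add_mul_comm, ← Matrix.det_smul, Matrix.smul_mul,
    smul_add, smul_smul, mul_inv_cancel₀ hc, one_smul]

theorem Matrix.tendsto_det_sq_smul_one_add {m : Type*} [Fintype m] [DecidableEq m]
    (C : Matrix m m ℝ) :
    Tendsto (fun δ : ℝ => ((δ ^ 2) • (1 : Matrix m m ℝ) + C).det) (𝓝 0) (𝓝 C.det) := by
  have hcont : Continuous fun δ : ℝ => ((δ ^ 2) • (1 : Matrix m m ℝ) + C).det :=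
    (((continuous_pow 2).smul continuous_const).add continuous_const).matrix_det
  simpa using hcont.tendsto 0

theorem stmt_5_general {n m : ℕ} (S : Matrix (Fin n) (Fin n) ℝ) (hS : S.PosDef)
    (H : Matrix (Fin m) (Fin n) ℝ) :
    Tendsto
      (fun δ : ℝ => δ ^ (2 * m) *
        ((1 : Matrix (Fin n) (Fin n) ℝ)
          + (δ ^ 2)⁻¹ • (hS.posSemidef.sqrt * (H.transpose * H) * hS.posSemidef.sqrt)).det)
      (nhdsWithin 0 (Set.Ioi 0))
      (nhds (H * S * H.transpose).det) := by
  set R := hS.posSemidef.sqrt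
  have hHS : H * R * (R * H.transpose) = H * S * H.transpose := by
    rw [Matrix.mul_assoc H R, ← Matrix.mul_assoc R, hS.posSemidef.sqrt_mul_sqrt, Matrix.mul_assoc]
  have hdet : ∀ δ : ℝ, δ ≠ 0 →
      ((δ ^ 2) • (1 : Matrix (Fin m) (Fin m) ℝ) + H * S * H.transpose).det =
        δ ^ (2 * m) * (1 + (δ ^ 2)⁻¹ • (R * (H.transpose * H) * R)).det := by
    intro δ hδ
    rw [← hHS, ← Matrix.pow_card_mul_det_one_add_inv_smul_mul (R * H.transpose) (H * R)
      (pow_ne_zero 2 hδ), Fintype.card_fin, pow_mul]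
    simp only [Matrix.mul_assoc]
  refine ((Matrix.tendsto_det_sq_smul_one_add _).mono_left nhdsWithin_le_nhds).congr' ?_
  filter_upwards [self_mem_nhdsWithin] with δ hδ
  exact hdet δ (ne_of_gt hδ)

/-- For positive definite `Σ` and a surjective (rank `m`) `m×n` matrix `H`, `m ≤ n`:
`lim_{δ→0⁺} δ^{2m} det(Iₙ + δ⁻² Σ^{1/2}HᵀHΣ^{1/2}) = det(HΣHᵀ)`. -/
theorem stmt_5 {n m : ℕ} (hmn : m ≤ n) (S : Matrix (Fin n) (Fin n) ℝ) (hS : S.PosDef)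
    (H : Matrix (Fin m) (Fin n) ℝ) (hrank : H.rank = m) :
    Tendsto
      (fun δ : ℝ => δ ^ (2 * m) *
        ((1 : Matrix (Fin n) (Fin n) ℝ)
          + (δ ^ 2)⁻¹ • (hS.posSemidef.sqrt * (H.transpose * H) * hS.posSemidef.sqrt)).det)
      (nhdsWithin 0 (Set.Ioi 0))
      (nhds (H * S * H.transpose).det) :=
  stmt_5_general S hS H
end

section
/- Let Σ be a positive definite real n×n matrix and let H be a real m×n matrix of rank m, with m ≤ n. For δ > 0 define f̂(δ) = det(2πΣ)^{-1/2} · (2π)^{-m/2} · δ^{-m} · det(Σ⁻¹ + δ⁻² HᵀH)^{-1/2} · (2π)^{n/2}. Then lim_{δ→0⁺} f̂(δ) = det(2π H Σ Hᵀ)^{-1/2}. -/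
/-!
Sylvester's identity `det (1 + A * B) = det (1 + B * A)` gives
`det (Σ⁻¹ + δ⁻² HᵀH) = (det Σ)⁻¹ δ^{-2m} det (δ² 1 + HΣHᵀ)`; substituting this, every power of
`δ`, of `2π` and of `det Σ` cancels, and `f̂(δ) = det (2π (δ² 1 + HΣHᵀ))^{-1/2}` for `δ > 0`.
As `H` has full row rank, `HΣHᵀ` is positive definite, so the right-hand side is continuous at
`δ = 0`, where it takes the claimed value.
-/

open Filter Real

namespace Matrix

variable {m n R : Type*} [Fintype m] [Fintype n]

theorem linearIndependent_row_of_rank_eq_card [Field R] {M : Matrix m n R}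
    (h : M.rank = Fintype.card m) : LinearIndependent R M.row := by
  rw [linearIndependent_iff_card_eq_finrank_span, Set.finrank, ← rank_eq_finrank_span_row, h]

theorem PosDef.mul_mul_transpose_of_rank_eq_card [DecidableEq n] {S : Matrix n n ℝ}
    (hS : S.PosDef) {H : Matrix m n ℝ} (hH : H.rank = Fintype.card m) : (H * S * Hᵀ).PosDef := by
  have hinj : Function.Injective H.vecMul :=
    vecMul_injective_iff.mpr (linearIndependent_row_of_rank_eq_card hH)
  simpa [conjTranspose_eq_transpose_of_trivial] using hS.mul_mul_conjTranspose_same hinj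

theorem det_inv_add_smul_transpose_mul [Field R] [DecidableEq m] [DecidableEq n]
    {S : Matrix n n R} (hS : IsUnit S.det) (H : Matrix m n R) {ε : R} (hε : ε ≠ 0) :
    (S⁻¹ + ε⁻¹ • (Hᵀ * H)).det = S.det⁻¹ * ε⁻¹ ^ Fintype.card m * (ε • 1 + H * S * Hᵀ).det := by
  have hfactor : S⁻¹ + ε⁻¹ • (Hᵀ * H) = S⁻¹ * (1 + (ε⁻¹ • (S * Hᵀ)) * H) := by
    rw [Matrix.mul_add, Matrix.mul_one, Matrix.smul_mul, Matrix.mul_smul, ← Matrix.mul_assoc,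
      ← Matrix.mul_assoc, nonsing_inv_mul _ hS, Matrix.one_mul]
  have hswap : 1 + H * (ε⁻¹ • (S * Hᵀ)) = ε⁻¹ • (ε • 1 + H * S * Hᵀ) := by
    rw [smul_add, smul_smul, inv_mul_cancel₀ hε, one_smul, Matrix.mul_smul, Matrix.mul_assoc]
  rw [hfactor, det_mul, det_nonsing_inv, Ring.inverse_eq_inv', det_one_add_mul_comm, hswap,
    det_smul, mul_assoc]

end Matrix

theorem laplace_prefactor_eq {a s d D : ℝ} (ha : 0 < a) (hs : 0 < s) (hd : 0 < d) (hD : 0 < D)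
    (m n : ℕ) :
    (a ^ n * s) ^ (-(1 / 2) : ℝ) * a ^ (-(m : ℝ) / 2) * d ^ (-(m : ℝ))
        * (s⁻¹ * ((d ^ 2)⁻¹) ^ m * D) ^ (-(1 / 2) : ℝ) * a ^ ((n : ℝ) / 2)
      = (a ^ m * D) ^ (-(1 / 2) : ℝ) := by
  refine Real.log_injOn_pos (Set.mem_Ioi.mpr (by positivity)) (Set.mem_Ioi.mpr (by positivity)) ?_
  simp (disch := positivity) only [Real.log_mul, Real.log_rpow, Real.log_pow, Real.log_inv]
  push_cast
  ring

theorem stmt_6_general {n m : ℕ} (S : Matrix (Fin n) (Fin n) ℝ) (hS : S.PosDef)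
    (H : Matrix (Fin m) (Fin n) ℝ) (hrank : H.rank = m) :
    Tendsto
      (fun δ : ℝ =>
        (((2 * π) • S).det) ^ (-(1 / 2 : ℝ)) * (2 * π) ^ (-(m : ℝ) / 2) * δ ^ (-(m : ℝ))
          * ((S⁻¹ + (δ ^ 2)⁻¹ • (H.transpose * H)).det) ^ (-(1 / 2 : ℝ))
          * (2 * π) ^ ((n : ℝ) / 2))
      (nhdsWithin 0 (Set.Ioi 0))
      (nhds ((((2 * π) • (H * S * H.transpose)).det) ^ (-(1 / 2 : ℝ)))) := by
  set M := H * S * H.transpose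
  have hM : M.PosDef := hS.mul_mul_transpose_of_rank_eq_card (by rwa [Fintype.card_fin])
  have hshift (δ : ℝ) : 0 < (δ ^ 2 • (1 : Matrix (Fin m) (Fin m) ℝ) + M).det :=
    (Matrix.PosDef.posSemidef_add (Matrix.PosSemidef.one.smul (sq_nonneg δ)) hM).det_pos
  have hcont : ContinuousAt
      (fun δ : ℝ => ((2 * π) • (δ ^ 2 • (1 : Matrix (Fin m) (Fin m) ℝ) + M)).det ^ (-(1 / 2 : ℝ)))
      0 := by
    refine ContinuousAt.rpow_const (by fun_prop) (Or.inl ?_)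
    simpa [Matrix.det_smul] using And.intro pi_ne_zero hM.det_pos.ne'
  have hlim := hcont.tendsto.mono_left (nhdsWithin_le_nhds (s := Set.Ioi 0))
  rw [zero_pow two_ne_zero, zero_smul, zero_add] at hlim
  refine hlim.congr' ?_
  filter_upwards [self_mem_nhdsWithin] with δ (hδ : 0 < δ)
  rw [Matrix.det_smul, Matrix.det_smul,
    Matrix.det_inv_add_smul_transpose_mul hS.det_pos.ne'.isUnit H (pow_ne_zero 2 hδ.ne'),
    Fintype.card_fin, Fintype.card_fin,
    laplace_prefactor_eq (by positivity) hS.det_pos hδ (hshift δ)]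

/-- The Laplace approximation
`f̂(δ) = det(2πΣ)^{-1/2} (2π)^{-m/2} δ^{-m} det(Σ⁻¹ + δ⁻²HᵀH)^{-1/2} (2π)^{n/2}`
converges, as `δ → 0⁺`, to the weak-noise density `det(2πHΣHᵀ)^{-1/2}`. -/
theorem stmt_6 {n m : ℕ} (hmn : m ≤ n) (S : Matrix (Fin n) (Fin n) ℝ) (hS : S.PosDef)
    (H : Matrix (Fin m) (Fin n) ℝ) (hrank : H.rank = m) :
    Tendsto
      (fun δ : ℝ =>
        (((2 * π) • S).det) ^ (-(1 / 2 : ℝ)) * (2 * π) ^ (-(m : ℝ) / 2) * δ ^ (-(m : ℝ))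
          * ((S⁻¹ + (δ ^ 2)⁻¹ • (H.transpose * H)).det) ^ (-(1 / 2 : ℝ))
          * (2 * π) ^ ((n : ℝ) / 2))
      (nhdsWithin 0 (Set.Ioi 0))
      (nhds ((((2 * π) • (H * S * H.transpose)).det) ^ (-(1 / 2 : ℝ)))) :=
  stmt_6_general S hS H hrank
end

section
/- Let T > 0, x₀ > 0, x_T > 0, r ∈ ℝ and σ ≠ 0. Set a = log(x_T/x₀)/T, and define X̄(t) = x₀·e^{a t} and Λ̄(t) = σ⁻²(r − a)·x₀⁻¹·e^{−a t} for t ∈ [0,T]. Then X̄(0) = x₀, X̄(T) = x_T, and the pair (X̄, Λ̄) satisfies the canonical equations X̄′(t) = r·X̄(t) − σ²·Λ̄(t)·X̄(t)² and Λ̄′(t) = −r·Λ̄(t) + σ²·Λ̄(t)²·X̄(t) for all t ∈ [0,T]. -/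
open Set

/-! Along the candidate path the product `σ²Λ̄X̄` is the constant `r − a`, so both canonical
equations collapse to the exponential growth laws `X̄′ = aX̄` and `Λ̄′ = −aΛ̄`, which hold by
construction. -/

namespace Real

theorem hasDerivAt_const_mul_exp_mul (c k t : ℝ) :
    HasDerivAt (fun s => c * exp (k * s)) (k * (c * exp (k * t))) t := by
  have h := (((hasDerivAt_id t).const_mul k).exp).const_mul c
  simp only [id, mul_one] at h
  exact h.congr_deriv (by ring)

theorem mul_exp_log_div_div_mul {x₀ xT T : ℝ} (hT : T ≠ 0) (hx₀ : 0 < x₀) (hxT : 0 < xT) :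
    x₀ * exp (log (xT / x₀) / T * T) = xT := by
  rw [div_mul_cancel₀ _ hT, exp_log (div_pos hxT hx₀), mul_div_cancel₀ _ hx₀.ne']

end Real

open Real

/-- The most probable path `X̄(t) = x₀e^{at}` (geometric interpolation of the
endpoints, `a = log(x_T/x₀)/T`) together with its co-state
`Λ̄(t) = σ⁻²(r−a)x₀⁻¹e^{−at}` satisfies the endpoint conditions and Pontryagin's
canonical equations `X̄′ = rX̄ − σ²Λ̄X̄²`, `Λ̄′ = −rΛ̄ + σ²Λ̄²X̄` on `[0,T]`. -/
theorem stmt_11 (T x₀ xT r σ a : ℝ) (hT : 0 < T) (hx₀ : 0 < x₀) (hxT : 0 < xT)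
    (hσ : σ ≠ 0) (ha : a = Real.log (xT / x₀) / T)
    (X L : ℝ → ℝ)
    (hX : X = fun t => x₀ * Real.exp (a * t))
    (hL : L = fun t => (σ ^ 2)⁻¹ * (r - a) * x₀⁻¹ * Real.exp (-(a * t))) :
    X 0 = x₀ ∧ X T = xT ∧
    (∀ t ∈ Icc (0:ℝ) T,
      HasDerivAt X (r * X t - σ ^ 2 * L t * (X t) ^ 2) t) ∧
    (∀ t ∈ Icc (0:ℝ) T,
      HasDerivAt L (-(r * L t) + σ ^ 2 * (L t) ^ 2 * X t) t) := by
  have hL' : L = fun t => (σ ^ 2)⁻¹ * (r - a) * x₀⁻¹ * exp (-a * t) := by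
    simp only [hL, neg_mul]
  have hLX : ∀ t, σ ^ 2 * L t * X t = r - a := fun t => by
    have : exp (-(a * t)) * exp (a * t) = 1 := by rw [← exp_add, neg_add_cancel, exp_zero]
    simp only [hL, hX]
    field_simp
    linear_combination (r - a) * this
  have hXd : ∀ t, HasDerivAt X (a * X t) t := fun t => by
    subst hX; exact hasDerivAt_const_mul_exp_mul x₀ a t
  have hLd : ∀ t, HasDerivAt L (-a * L t) t := fun t => by
    rw [hL']; exact hasDerivAt_const_mul_exp_mul _ (-a) t
  refine ⟨by simp [hX], ?_, fun t _ => ?_, fun t _ => ?_⟩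
  · simpa [hX, ha] using mul_exp_log_div_div_mul hT.ne' hx₀ hxT
  · exact (hXd t).congr_deriv (by linear_combination X t * hLX t)
  · exact (hLd t).congr_deriv (by linear_combination -(L t) * hLX t)
end

section
/- Let T > 0, x₀ > 0, x_T > 0, r ∈ ℝ and σ ≠ 0. Set a = log(x_T/x₀)/T, γ = (r − a)/σ², X̄(t) = x₀·e^{a t}, Λ̄(t) = γ/X̄(t), and Q(t) = −γ/X̄(t)². Then Q satisfies the Riccati equation Q′(t) − σ²·Λ̄(t)² + 2·(r − 2σ²·Λ̄(t)·X̄(t))·Q(t) − σ²·X̄(t)²·Q(t)² = 0 for all t ∈ [0,T]. -/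
open Set

/-! The most probable path grows exponentially, `X̄′ = a X̄`, so `Q = −γ/X̄²` satisfies
`Q′ = 2aγ/X̄²`. Substituting `Λ̄ X̄ = γ`, every term of the Riccati equation is a multiple of
`γ/X̄²`, and the coefficients add up to `2γ(a + σ²γ − r)`, which vanishes by the choice
`γ = (r − a)/σ²`. -/

theorem HasDerivAt.neg_div_sq_of_exponential {X : ℝ → ℝ} {a γ t : ℝ}
    (hX : HasDerivAt X (a * X t) t) (hXt : X t ≠ 0) :
    HasDerivAt (fun s => -γ / X s ^ 2) (2 * a * γ / X t ^ 2) t := by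
  refine ((hasDerivAt_const t (-γ)).div (hX.fun_pow 2) (pow_ne_zero 2 hXt)).congr_deriv ?_
  field_simp
  ring

theorem riccati_residual_neg_div_sq_eq_zero {x a r σ γ : ℝ} (hx : x ≠ 0)
    (hγ : σ ^ 2 * γ = r - a) :
    2 * a * γ / x ^ 2 - σ ^ 2 * (γ / x) ^ 2 + 2 * (r - 2 * σ ^ 2 * (γ / x) * x) * (-γ / x ^ 2)
      - σ ^ 2 * x ^ 2 * (-γ / x ^ 2) ^ 2 = 0 := by
  obtain rfl : r = σ ^ 2 * γ + a := by linarith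
  field_simp
  ring

theorem stmt_13_general (T x₀ r σ a γ : ℝ) (hx₀ : 0 < x₀)
    (hσ : σ ≠ 0) (hγ : γ = (r - a) / σ ^ 2)
    (X L Q : ℝ → ℝ)
    (hX : X = fun t => x₀ * Real.exp (a * t))
    (hL : L = fun t => γ / X t)
    (hQ : Q = fun t => -γ / (X t) ^ 2) :
    ∀ t ∈ Icc (0:ℝ) T,
      deriv Q t - σ ^ 2 * (L t) ^ 2 + 2 * (r - 2 * σ ^ 2 * L t * X t) * Q t
        - σ ^ 2 * (X t) ^ 2 * (Q t) ^ 2 = 0 := by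
  intro t _
  have hXt : X t ≠ 0 := by rw [hX]; positivity
  have hX' : HasDerivAt X (a * X t) t := by
    subst hX
    simpa [mul_comm, mul_left_comm] using ((hasDerivAt_id t).const_mul a).exp.const_mul x₀
  have hγσ : σ ^ 2 * γ = r - a := by rw [hγ]; field_simp
  subst hL hQ
  rw [(hX'.neg_div_sq_of_exponential hXt).deriv]
  exact riccati_residual_neg_div_sq_eq_zero hXt hγσ

/-- For geometric Brownian motion, the Hessian `Q(t) = −γ/X̄(t)²` of the value
function along the most probable path `X̄(t) = x₀e^{at}` (with
`a = log(x_T/x₀)/T`, `γ = (r−a)/σ²`, co-state `Λ̄ = γ/X̄`) satisfies the Riccati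
equation `Q′ − σ²Λ̄² + 2(r − 2σ²Λ̄X̄)Q − σ²X̄²Q² = 0` on `[0,T]`. -/
theorem stmt_13 (T x₀ xT r σ a γ : ℝ) (hT : 0 < T) (hx₀ : 0 < x₀) (hxT : 0 < xT)
    (hσ : σ ≠ 0) (ha : a = Real.log (xT / x₀) / T) (hγ : γ = (r - a) / σ ^ 2)
    (X L Q : ℝ → ℝ)
    (hX : X = fun t => x₀ * Real.exp (a * t))
    (hL : L = fun t => γ / X t)
    (hQ : Q = fun t => -γ / (X t) ^ 2) :
    ∀ t ∈ Icc (0:ℝ) T,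
      deriv Q t - σ ^ 2 * (L t) ^ 2 + 2 * (r - 2 * σ ^ 2 * L t * X t) * Q t
        - σ ^ 2 * (X t) ^ 2 * (Q t) ^ 2 = 0 :=
  stmt_13_general T x₀ r σ a γ hx₀ hσ hγ X L Q hX hL hQ
end
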